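/- arXiv:2401.11683 — 2 statements merged into one kernel-verified Lean document; each statement's English description precedes it below -/
import Mathlib

section
/- Let 1 ≤ N ≤ 3, γ > 0 with γ ≠ 3, c ∈ ℝ^N and ω > max{|c|²/4, γ|c|²/12}. If (u, v) ∈ H¹(ℝ^N)×H¹(ℝ^N) satisfies Ñ_{ω,c}(u, v) < 0, then (1/2)Q̃_{ω,c}(u, v) > μ̃_{ω,c}. -/
/-! Q̃ is coercive under the hypothesis on ω, so Ñ < 0 forces D̃ > Q̃/2 > 0. Since Q̃ is
2-homogeneous and D̃ is 4-homogeneous, the ray through (u, v) meets the Nehari set at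
(t u, t v) with t² = Q̃ / (2 D̃) < 1, where S̃ = t² Q̃ / 2 < Q̃ / 2. -/

open MeasureTheory Complex Filter
open scoped RealInnerProductSpace

noncomputable section

abbrev Vec (N : ℕ) := EuclideanSpace ℝ (Fin N)
abbrev Fn (N : ℕ) := Vec N → ℂ
abbrev FnR (N : ℕ) := Vec N → ℝ

/-- Partial derivative in the `i`-th coordinate direction. -/
def pd {N : ℕ} (i : Fin N) (u : Fn N) (x : Vec N) : ℂ :=
  fderiv ℝ u x (EuclideanSpace.single i 1)

def pdR {N : ℕ} (i : Fin N) (u : FnR N) (x : Vec N) : ℝ :=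
  fderiv ℝ u x (EuclideanSpace.single i 1)

/-- Laplacian. -/
def lap {N : ℕ} (u : Fn N) (x : Vec N) : ℂ := ∑ i, pd i (fun y => pd i u y) x

def lapR {N : ℕ} (u : FnR N) (x : Vec N) : ℝ := ∑ i, pdR i (fun y => pdR i u y) x

/-- `c · ∇u`. -/
def cgrad {N : ℕ} (c : Vec N) (u : Fn N) (x : Vec N) : ℂ := ∑ i, (c i : ℂ) * pd i u x

/-- Membership in `H¹(ℝ^N; ℂ)`. -/
def MemH1 {N : ℕ} (u : Fn N) : Prop :=
  MemLp u 2 (volume : Measure (Vec N)) ∧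
    MemLp (fun x => fderiv ℝ u x) 2 (volume : Measure (Vec N))

def MemH1R {N : ℕ} (u : FnR N) : Prop :=
  MemLp u 2 (volume : Measure (Vec N)) ∧
    MemLp (fun x => fderiv ℝ u x) 2 (volume : Measure (Vec N))

def L2sq {N : ℕ} (u : Fn N) : ℝ := ∫ x : Vec N, ‖u x‖ ^ 2
def L2sqR {N : ℕ} (u : FnR N) : ℝ := ∫ x : Vec N, (u x) ^ 2
def gradSq {N : ℕ} (u : Fn N) : ℝ := ∫ x : Vec N, ∑ i, ‖pd i u x‖ ^ 2
def gradSqR {N : ℕ} (u : FnR N) : ℝ := ∫ x : Vec N, ∑ i, (pdR i u x) ^ 2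

/-- `(f, g) = Re ∫ f ḡ`. -/
def reInner {N : ℕ} (f g : Fn N) : ℝ := ∫ x : Vec N, (f x * (starRingEnd ℂ) (g x)).re

/-- The functional `D(u,v)`. -/
def Dfun {N : ℕ} (u v : Fn N) : ℝ :=
  ∫ x : Vec N, ((1 : ℝ)/36) * ‖u x‖ ^ 4 + (9/4) * ‖v x‖ ^ 4 + ‖u x‖ ^ 2 * ‖v x‖ ^ 2
    + (1/9) * (((starRingEnd ℂ) (u x)) ^ 3 * v x).re

/-- `c · P(u,v)` where `P` is the momentum. -/
def cdotP {N : ℕ} (γ : ℝ) (c : Vec N) (u v : Fn N) : ℝ :=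
  ∑ i, c i * ((∫ x : Vec N, (Complex.I * pd i u x * (starRingEnd ℂ) (u x)).re)
    + γ * (∫ x : Vec N, (Complex.I * pd i v x * (starRingEnd ℂ) (v x)).re))

def Qfun {N : ℕ} (γ ω : ℝ) (c : Vec N) (u v : Fn N) : ℝ :=
  (1/2) * gradSq u + (1/2) * gradSq v + (ω/2) * L2sq u + (3*γ*ω/2) * L2sq v
    + (1/2) * cdotP γ c u v

def Sfun {N : ℕ} (γ ω : ℝ) (c : Vec N) (u v : Fn N) : ℝ := Qfun γ ω c u v - Dfun u v

def Nfun {N : ℕ} (γ ω : ℝ) (c : Vec N) (u v : Fn N) : ℝ :=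
  2 * Qfun γ ω c u v - 4 * Dfun u v

/-- `(φ, ψ)` is an (H¹, classical) solution of the stationary system (S). -/
structure IsSolution {N : ℕ} (γ ω : ℝ) (c : Vec N) (φ ψ : Fn N) : Prop where
  regφ : ContDiff ℝ 2 φ
  regψ : ContDiff ℝ 2 ψ
  memφ : MemH1 φ
  memψ : MemH1 ψ
  eq1 : ∀ x, -lap φ x + (ω : ℂ) * φ x + Complex.I * cgrad c φ x
      - ((‖φ x‖ ^ 2 / 9 + 2 * ‖ψ x‖ ^ 2 : ℝ) : ℂ) * φ x
      - (1/3) * ((starRingEnd ℂ) (φ x)) ^ 2 * ψ x = 0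
  eq2 : ∀ x, -lap ψ x + ((3 * γ * ω : ℝ) : ℂ) * ψ x + Complex.I * (γ : ℂ) * cgrad c ψ x
      - ((9 * ‖ψ x‖ ^ 2 + 2 * ‖φ x‖ ^ 2 : ℝ) : ℂ) * ψ x - (1/9) * (φ x) ^ 3 = 0

/-- Nonzero solutions of (S). -/
def ASet {N : ℕ} (γ ω : ℝ) (c : Vec N) : Set (Fn N × Fn N) :=
  {p | p ≠ 0 ∧ IsSolution γ ω c p.1 p.2}

/-- Boosted ground states. -/
def GSet {N : ℕ} (γ ω : ℝ) (c : Vec N) : Set (Fn N × Fn N) :=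
  {p ∈ ASet γ ω c | ∀ q ∈ ASet γ ω c, Sfun γ ω c p.1 p.2 ≤ Sfun γ ω c q.1 q.2}

def NehariSet {N : ℕ} (γ ω : ℝ) (c : Vec N) : Set (Fn N × Fn N) :=
  {p | MemH1 p.1 ∧ MemH1 p.2 ∧ p ≠ 0 ∧ Nfun γ ω c p.1 p.2 = 0}

def mu {N : ℕ} (γ ω : ℝ) (c : Vec N) : ℝ :=
  sInf ((fun p : Fn N × Fn N => Sfun γ ω c p.1 p.2) '' NehariSet γ ω c)

def aSet {N : ℕ} (γ ω : ℝ) (c : Vec N) : Set (Fn N × Fn N) :=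
  {p ∈ NehariSet γ ω c | Sfun γ ω c p.1 p.2 = mu γ ω c}

/-- Gauged quadratic form `Q̃_{ω,c}`. -/
def Qt {N : ℕ} (γ ω : ℝ) (c : Vec N) (u v : Fn N) : ℝ :=
  (1/2) * gradSq u + (1/2) * gradSq v + (1/2) * (ω - ‖c‖ ^ 2 / 4) * L2sq u
    + (1/2) * (3*γ*ω - γ ^ 2 * ‖c‖ ^ 2 / 4) * L2sq v

/-- Gauged nonlinear functional `D̃`. -/
def Dt {N : ℕ} (γ : ℝ) (c : Vec N) (u v : Fn N) : ℝ :=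
  ∫ x : Vec N, ((1 : ℝ)/36) * ‖u x‖ ^ 4 + (9/4) * ‖v x‖ ^ 4 + ‖u x‖ ^ 2 * ‖v x‖ ^ 2
    + (1/9) * (Complex.exp (Complex.I * (((3 - γ)/2 * ⟪c, x⟫ : ℝ) : ℂ))
        * ((starRingEnd ℂ) (u x)) ^ 3 * v x).re

def St {N : ℕ} (γ ω : ℝ) (c : Vec N) (u v : Fn N) : ℝ := Qt γ ω c u v - Dt γ c u v

def Nt {N : ℕ} (γ ω : ℝ) (c : Vec N) (u v : Fn N) : ℝ := 2 * Qt γ ω c u v - 4 * Dt γ c u v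

def NehariT {N : ℕ} (γ ω : ℝ) (c : Vec N) : Set (Fn N × Fn N) :=
  {p | MemH1 p.1 ∧ MemH1 p.2 ∧ p ≠ 0 ∧ Nt γ ω c p.1 p.2 = 0}

def muT {N : ℕ} (γ ω : ℝ) (c : Vec N) : ℝ :=
  sInf ((fun p : Fn N × Fn N => St γ ω c p.1 p.2) '' NehariT γ ω c)

def aT {N : ℕ} (γ ω : ℝ) (c : Vec N) : Set (Fn N × Fn N) :=
  {p ∈ NehariT γ ω c | St γ ω c p.1 p.2 = muT γ ω c}

/-- `(φ, ψ)` is a critical point of `S̃_{ω,c}` (vanishing Gateaux derivative in all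
H¹ directions). -/
def CritT {N : ℕ} (γ ω : ℝ) (c : Vec N) (φ ψ : Fn N) : Prop :=
  ∀ h k : Fn N, MemH1 h → MemH1 k →
    HasDerivAt (fun t : ℝ => St γ ω c (φ + t • h) (ψ + t • k)) 0 0

def AT {N : ℕ} (γ ω : ℝ) (c : Vec N) : Set (Fn N × Fn N) :=
  {p | MemH1 p.1 ∧ MemH1 p.2 ∧ p ≠ 0 ∧ CritT γ ω c p.1 p.2}

def GT {N : ℕ} (γ ω : ℝ) (c : Vec N) : Set (Fn N × Fn N) :=
  {p ∈ AT γ ω c | ∀ q ∈ AT γ ω c, St γ ω c p.1 p.2 ≤ St γ ω c q.1 q.2}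

/-- Gauged translation `τ̃_y`. -/
def tauT {N : ℕ} (γ : ℝ) (c : Vec N) (y : Vec N) (p : Fn N × Fn N) : Fn N × Fn N :=
  (fun x => Complex.exp (-Complex.I * (((⟪c, x⟫ : ℝ)/2 : ℝ) : ℂ)) * p.1 (x - y),
   fun x => Complex.exp (-Complex.I * ((γ * (⟪c, x⟫ : ℝ)/2 : ℝ) : ℂ)) * p.2 (x - y))

/-- Real part of the `H¹` inner product. -/
def h1Inner {N : ℕ} (f g : Fn N) : ℝ :=
  reInner f g + ∫ x : Vec N, ∑ i, (pd i f x * (starRingEnd ℂ) (pd i g x)).re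

/-- Weak convergence in `H¹`, expressed through pairings. -/
def WeakH1 {N : ℕ} (un : ℕ → Fn N) (u : Fn N) : Prop :=
  ∀ g : Fn N, MemH1 g → Tendsto (fun n => h1Inner (un n) g) atTop (nhds (h1Inner u g))

def h1distSq {N : ℕ} (f g : Fn N) : ℝ := L2sq (f - g) + gradSq (f - g)

/-- Strong convergence in `H¹`. -/
def StrongH1 {N : ℕ} (un : ℕ → Fn N) (u : Fn N) : Prop :=
  Tendsto (fun n => h1distSq (un n) u) atTop (nhds 0)

/-- `(u, v)` is a global (classical, H¹) solution of the time-dependent system (NLS). -/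
structure IsNLS {N : ℕ} (γ : ℝ) (u v : ℝ → Fn N) : Prop where
  regSpaceU : ∀ t, ContDiff ℝ 2 (u t)
  regSpaceV : ∀ t, ContDiff ℝ 2 (v t)
  regTimeU : ∀ x, Differentiable ℝ (fun t => u t x)
  regTimeV : ∀ x, Differentiable ℝ (fun t => v t x)
  memU : ∀ t, MemH1 (u t)
  memV : ∀ t, MemH1 (v t)
  eq1 : ∀ t x, Complex.I * deriv (fun s => u s x) t + lap (u t) x
      + ((‖u t x‖ ^ 2 / 9 + 2 * ‖v t x‖ ^ 2 : ℝ) : ℂ) * u t x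
      + (1/3) * ((starRingEnd ℂ) (u t x)) ^ 2 * v t x = 0
  eq2 : ∀ t x, Complex.I * (γ : ℂ) * deriv (fun s => v s x) t + lap (v t) x
      + ((9 * ‖v t x‖ ^ 2 + 2 * ‖u t x‖ ^ 2 : ℝ) : ℂ) * v t x
      + (1/9) * (u t x) ^ 3 = 0

/-- Nonlinear part of the action for the elliptic system without the cubic coupling. -/
def DstarR {N : ℕ} (u v : FnR N) : ℝ :=
  ∫ x : Vec N, ((1 : ℝ)/36) * (u x) ^ 4 + (9/4) * (v x) ^ 4 + (u x) ^ 2 * (v x) ^ 2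

def SstarR {N : ℕ} (γ : ℝ) (u v : FnR N) : ℝ :=
  (1/2) * (gradSqR u + gradSqR v) + (1/2) * L2sqR u + (3*γ/2) * L2sqR v - DstarR u v

structure IsSolStar {N : ℕ} (γ : ℝ) (u v : FnR N) : Prop where
  regu : ContDiff ℝ 2 u
  regv : ContDiff ℝ 2 v
  memu : MemH1R u
  memv : MemH1R v
  eq1 : ∀ x, -lapR u x + u x = (1/9) * (u x) ^ 3 + 2 * (v x) ^ 2 * (u x)
  eq2 : ∀ x, -lapR v x + 3*γ*(v x) = 9 * (v x) ^ 3 + 2 * (u x) ^ 2 * (v x)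

/-- `(Q*, P*)` : positive ground state of the uncoupled elliptic system. -/
def IsGSStar {N : ℕ} (γ : ℝ) (Q P : FnR N) : Prop :=
  IsSolStar γ Q P ∧ (∀ x, 0 < Q x) ∧ (∀ x, 0 < P x) ∧
    ∀ u v : FnR N, IsSolStar γ u v → (u, v) ≠ 0 → SstarR γ Q P ≤ SstarR γ u v

def DfullR {N : ℕ} (u v : FnR N) : ℝ :=
  ∫ x : Vec N, ((1 : ℝ)/36) * (u x) ^ 4 + (9/4) * (v x) ^ 4 + (u x) ^ 2 * (v x) ^ 2
    + (1/9) * (u x) ^ 3 * (v x)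

def SfullR {N : ℕ} (γ : ℝ) (u v : FnR N) : ℝ :=
  (1/2) * (gradSqR u + gradSqR v) + (1/2) * L2sqR u + (3*γ/2) * L2sqR v - DfullR u v

structure IsSolFull {N : ℕ} (γ : ℝ) (u v : FnR N) : Prop where
  regu : ContDiff ℝ 2 u
  regv : ContDiff ℝ 2 v
  memu : MemH1R u
  memv : MemH1R v
  eq1 : ∀ x, -lapR u x + u x
      = (1/9) * (u x) ^ 3 + 2 * (v x) ^ 2 * (u x) + (1/3) * (u x) ^ 2 * (v x)
  eq2 : ∀ x, -lapR v x + 3*γ*(v x)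
      = 9 * (v x) ^ 3 + 2 * (u x) ^ 2 * (v x) + (1/9) * (u x) ^ 3

/-- `(Q, P)` : positive ground state of the fully coupled elliptic system. -/
def IsGSFull {N : ℕ} (γ : ℝ) (Q P : FnR N) : Prop :=
  IsSolFull γ Q P ∧ (∀ x, 0 < Q x) ∧ (∀ x, 0 < P x) ∧
    ∀ u v : FnR N, IsSolFull γ u v → (u, v) ≠ 0 → SfullR γ Q P ≤ SfullR γ u v

def SQfun {N : ℕ} (γ ω : ℝ) (u : FnR N) : ℝ :=
  (1/2) * gradSqR u + (3*γ*ω/2) * L2sqR u - (9/4) * ∫ x : Vec N, (u x) ^ 4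

structure IsSolQ {N : ℕ} (γ ω : ℝ) (u : FnR N) : Prop where
  reg : ContDiff ℝ 2 u
  mem : MemH1R u
  eq : ∀ x, -lapR u x + 3*γ*ω*(u x) = 9 * (u x) ^ 3

/-- `Q` : positive ground state of `-ΔQ + 3γω Q = 9 Q³`. -/
def IsGSQ {N : ℕ} (γ ω : ℝ) (Q : FnR N) : Prop :=
  IsSolQ γ ω Q ∧ (∀ x, 0 < Q x) ∧ ∀ u : FnR N, IsSolQ γ ω u → u ≠ 0 → SQfun γ ω Q ≤ SQfun γ ω u


section GaugedAction

variable {N : ℕ} (γ ω : ℝ) (c : Vec N)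

lemma L2sq_nonneg (u : Fn N) : 0 ≤ L2sq u :=
  integral_nonneg fun _ => sq_nonneg _

lemma gradSq_nonneg (u : Fn N) : 0 ≤ gradSq u :=
  integral_nonneg fun _ => Finset.sum_nonneg fun _ _ => sq_nonneg _

lemma pd_smul (t : ℝ) (u : Fn N) (i : Fin N) (x : Vec N) : pd i (t • u) x = t • pd i u x := by
  simp [pd, fderiv_const_smul_field]

lemma L2sq_smul (t : ℝ) (u : Fn N) : L2sq (t • u) = t ^ 2 * L2sq u := by
  simp only [L2sq, ← integral_const_mul, Pi.smul_apply, norm_smul, mul_pow, Real.norm_eq_abs,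
    sq_abs]

lemma gradSq_smul (t : ℝ) (u : Fn N) : gradSq (t • u) = t ^ 2 * gradSq u := by
  simp only [gradSq, ← integral_const_mul, Finset.mul_sum, pd_smul, norm_smul, mul_pow,
    Real.norm_eq_abs, sq_abs]

lemma memH1_smul (t : ℝ) {u : Fn N} (hu : MemH1 u) : MemH1 (t • u) := by
  refine ⟨hu.1.const_smul t, ?_⟩
  simpa only [fderiv_const_smul_field] using hu.2.const_smul t

lemma Qt_smul (t : ℝ) (u v : Fn N) : Qt γ ω c (t • u) (t • v) = t ^ 2 * Qt γ ω c u v := by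
  simp only [Qt, gradSq_smul, L2sq_smul]
  ring

lemma Dt_smul (t : ℝ) (u v : Fn N) : Dt γ c (t • u) (t • v) = t ^ 4 * Dt γ c u v := by
  rw [Dt, Dt, ← integral_const_mul]
  congr 1
  funext x
  simp only [Pi.smul_apply, Complex.real_smul, map_mul, Complex.conj_ofReal, norm_mul,
    Complex.norm_real, Real.norm_eq_abs]
  have hcoupling : ∀ e a b : ℂ,
      e * ((t : ℂ) * a) ^ 3 * ((t : ℂ) * b) = ((t ^ 4 : ℝ) : ℂ) * (e * a ^ 3 * b) :=
    fun _ _ _ => by push_cast; ring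
  have habs : |t| ^ 4 = t ^ 4 := Even.pow_abs ⟨2, rfl⟩ t
  rw [hcoupling, Complex.re_ofReal_mul]
  simp only [mul_pow, sq_abs, habs]
  ring

lemma ae_eq_zero_of_L2sq_eq_zero {u : Fn N} (hu : MemLp u 2 volume) (h : L2sq u = 0) :
    u =ᵐ[volume] 0 := by
  have hint : Integrable (fun x => ‖u x‖ ^ 2) volume := hu.integrable_norm_pow two_ne_zero
  filter_upwards [(integral_eq_zero_iff_of_nonneg (fun _ => sq_nonneg _) hint).mp h] with x hx
  simpa using hx

lemma Qt_nonneg (h₁ : 0 ≤ ω - ‖c‖ ^ 2 / 4) (h₂ : 0 ≤ 3 * γ * ω - γ ^ 2 * ‖c‖ ^ 2 / 4)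
    (u v : Fn N) : 0 ≤ Qt γ ω c u v := by
  have := mul_nonneg h₁ (L2sq_nonneg u)
  have := mul_nonneg h₂ (L2sq_nonneg v)
  have := gradSq_nonneg u
  have := gradSq_nonneg v
  unfold Qt
  linarith

lemma St_eq_half_Qt_of_Nt_eq_zero {u v : Fn N} (h : Nt γ ω c u v = 0) :
    St γ ω c u v = Qt γ ω c u v / 2 := by
  unfold Nt at h
  unfold St
  linarith

lemma Dt_eq_zero_of_Qt_eq_zero (h₁ : 0 < ω - ‖c‖ ^ 2 / 4)
    (h₂ : 0 < 3 * γ * ω - γ ^ 2 * ‖c‖ ^ 2 / 4) {u v : Fn N} (hu : MemLp u 2 volume)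
    (hv : MemLp v 2 volume) (hQ : Qt γ ω c u v = 0) : Dt γ c u v = 0 := by
  have hu2 := mul_nonneg h₁.le (L2sq_nonneg u)
  have hv2 := mul_nonneg h₂.le (L2sq_nonneg v)
  have := gradSq_nonneg u
  have := gradSq_nonneg v
  unfold Qt at hQ
  have hu0 := ae_eq_zero_of_L2sq_eq_zero hu
    ((mul_eq_zero.mp (by linarith : (ω - ‖c‖ ^ 2 / 4) * L2sq u = 0)).resolve_left h₁.ne')
  have hv0 := ae_eq_zero_of_L2sq_eq_zero hv
    ((mul_eq_zero.mp (by linarith : (3 * γ * ω - γ ^ 2 * ‖c‖ ^ 2 / 4) * L2sq v = 0)).resolve_left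
      h₂.ne')
  rw [Dt, ← integral_zero (Vec N) ℝ]
  refine integral_congr_ae ?_
  filter_upwards [hu0, hv0] with x hux hvx
  simp [hux, hvx]

lemma bddBelow_St_image_NehariT (h₁ : 0 ≤ ω - ‖c‖ ^ 2 / 4)
    (h₂ : 0 ≤ 3 * γ * ω - γ ^ 2 * ‖c‖ ^ 2 / 4) :
    BddBelow ((fun p : Fn N × Fn N => St γ ω c p.1 p.2) '' NehariT γ ω c) := by
  refine ⟨0, ?_⟩
  rintro _ ⟨p, ⟨-, -, -, hp⟩, rfl⟩
  dsimp only
  rw [St_eq_half_Qt_of_Nt_eq_zero γ ω c hp]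
  exact div_nonneg (Qt_nonneg γ ω c h₁ h₂ _ _) zero_le_two

/-- The Nehari projection of `(u, v)` is `(t u, t v)` with `t² = Q̃ / (2 D̃)`, at which
`S̃ = t² Q̃ - t⁴ D̃ = Q̃² / (4 D̃)`. -/
lemma muT_le_sq_div (h₁ : 0 ≤ ω - ‖c‖ ^ 2 / 4) (h₂ : 0 ≤ 3 * γ * ω - γ ^ 2 * ‖c‖ ^ 2 / 4)
    {u v : Fn N} (hu : MemH1 u) (hv : MemH1 v) (hQ : 0 < Qt γ ω c u v)
    (hD : 0 < Dt γ c u v) : muT γ ω c ≤ Qt γ ω c u v ^ 2 / (4 * Dt γ c u v) := by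
  set t := Real.sqrt (Qt γ ω c u v / (2 * Dt γ c u v))
  have ht : t ^ 2 = Qt γ ω c u v / (2 * Dt γ c u v) := Real.sq_sqrt (by positivity)
  have hQt : Qt γ ω c (t • u) (t • v) = Qt γ ω c u v ^ 2 / (2 * Dt γ c u v) := by
    rw [Qt_smul, ht]
    ring
  have hDt : Dt γ c (t • u) (t • v) = Qt γ ω c u v ^ 2 / (4 * Dt γ c u v) := by
    rw [Dt_smul, show t ^ 4 = (t ^ 2) ^ 2 by ring, ht]
    field_simp
    ring
  have hne : (t • u, t • v) ≠ 0 := fun h0 => by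
    obtain ⟨htu, htv⟩ := Prod.mk_eq_zero.mp h0
    have hzero : Qt γ ω c (t • u) (t • v) = 0 := by
      simpa [htu, htv] using Qt_smul γ ω c 0 0 0
    rw [hQt] at hzero
    exact (div_pos (pow_pos hQ 2) (by positivity)).ne' hzero
  have hmem : (t • u, t • v) ∈ NehariT γ ω c := by
    refine ⟨memH1_smul t hu, memH1_smul t hv, hne, ?_⟩
    rw [Nt, hQt, hDt]
    field_simp
    ring
  calc muT γ ω c ≤ St γ ω c (t • u) (t • v) :=
        csInf_le (bddBelow_St_image_NehariT γ ω c h₁ h₂) ⟨_, hmem, rfl⟩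
    _ = Qt γ ω c u v ^ 2 / (4 * Dt γ c u v) := by
        rw [St, hQt, hDt]
        field_simp
        ring

end GaugedAction

theorem stmt_12_general {N : ℕ}
    (γ : ℝ) (hγ : 0 < γ) (c : Vec N) (ω : ℝ)
    (hω : ω > max (‖c‖ ^ 2 / 4) (γ * ‖c‖ ^ 2 / 12))
    (u v : Fn N) (hu : MemH1 u) (hv : MemH1 v)
    (hNeg : Nt γ ω c u v < 0) :
    muT γ ω c < (1/2) * Qt γ ω c u v := by
  obtain ⟨hω₁, hω₂⟩ := max_lt_iff.mp hω
  have h₁ : 0 < ω - ‖c‖ ^ 2 / 4 := by linarith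
  have h₂ : 0 < 3 * γ * ω - γ ^ 2 * ‖c‖ ^ 2 / 4 := by nlinarith
  have hQ : 0 < Qt γ ω c u v := by
    refine (Qt_nonneg γ ω c h₁.le h₂.le u v).lt_of_ne fun hQ => hNeg.not_ge ?_
    rw [Nt, ← hQ, Dt_eq_zero_of_Qt_eq_zero γ ω c h₁ h₂ hu.1 hv.1 hQ.symm]
    norm_num
  have hD : 0 < Dt γ c u v := by
    unfold Nt at hNeg
    linarith
  calc muT γ ω c ≤ Qt γ ω c u v ^ 2 / (4 * Dt γ c u v) :=
        muT_le_sq_div γ ω c h₁.le h₂.le hu hv hQ hD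
    _ < (1/2) * Qt γ ω c u v := by
        rw [div_lt_iff₀ (by positivity)]
        unfold Nt at hNeg
        nlinarith

/-- if `Ñ_{ω,c}(u,v) < 0`, then `(1/2)Q̃_{ω,c}(u,v) > μ̃_{ω,c}`. -/
theorem stmt_12 {N : ℕ} (hN1 : 1 ≤ N) (hN3 : N ≤ 3)
    (γ : ℝ) (hγ : 0 < γ) (hγ3 : γ ≠ 3) (c : Vec N) (ω : ℝ)
    (hω : ω > max (‖c‖ ^ 2 / 4) (γ * ‖c‖ ^ 2 / 12))
    (u v : Fn N) (hu : MemH1 u) (hv : MemH1 v)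
    (hNeg : Nt γ ω c u v < 0) :
    muT γ ω c < (1/2) * Qt γ ω c u v :=
  stmt_12_general γ hγ c ω hω u v hu hv hNeg

end
end

section
/- Let 1 ≤ N ≤ 3, γ > 0, and let (ω, c) ∈ ℝ×ℝ^N satisfy ω > 0 and c ≠ 0 (with ω > max{|c|²/4, γ|c|²/12} so that the Nehari levels are defined). Then the Nehari level satisfies the scaling relation μ_{ω,c} = |c|^{4−N} · μ_{ω/|c|², c/|c|}. -/
open MeasureTheory Complex Filter
open scoped RealInnerProductSpace

noncomputable section

/-- Scaling map used for the Nehari level scaling relation. -/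
def Sc {N : ℕ} (r : ℝ) (u : Fn N) : Fn N := fun x => (r : ℂ) * u (r • x)

lemma Sc_Sc {N : ℕ} {r : ℝ} (hr : r ≠ 0) (u : Fn N) : Sc r⁻¹ (Sc r u) = u := by
  funext x
  simp only [Sc, smul_smul, mul_inv_cancel₀ hr, one_smul, ← mul_assoc, ← Complex.ofReal_mul,
    inv_mul_cancel₀ hr, Complex.ofReal_one, one_mul]

/-! Under the dilation `u ↦ r u(r ·)` and the change of parameters `(ω, c) ↦ (r² ω, r c)`,
every term of `Q` and `D` (gradient, mass, momentum, quartic) is multiplied by the same factor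
`r⁴ / r^N`. So the action and the Nehari functional scale by `r⁴ / r^N`, the invertible dilation
maps the Nehari manifold of `(ω, c)` onto that of `(r² ω, r c)`, and the two Nehari levels differ
by that factor; take `r = |c|`. -/

open scoped Pointwise

lemma MemLp.comp_smul {E F : Type*} [NormedAddCommGroup E] [NormedSpace ℝ E] [MeasurableSpace E]
    [BorelSpace E] [FiniteDimensional ℝ E] {μ : Measure E} [μ.IsAddHaarMeasure]
    [NormedAddCommGroup F] {p : ENNReal} {f : E → F} (hf : MemLp f p μ) {r : ℝ} (hr : r ≠ 0) :
    MemLp (fun x => f (r • x)) p μ := by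
  have hmap : MemLp f p (μ.map (r • ·)) := by
    rw [Measure.map_addHaar_smul μ hr]
    exact hf.smul_measure ENNReal.ofReal_ne_top
  exact (memLp_map_measure_iff hmap.1 (measurable_const_smul r).aemeasurable).1 hmap

def rescale {N : ℕ} (r : ℝ) (u : Fn N) : Fn N := fun x => (r : ℂ) * u (r • x)

section Rescale

variable {N : ℕ}

lemma rescale_zero (r : ℝ) : rescale r (0 : Fn N) = 0 := by
  funext x
  simp [rescale]

lemma rescale_inv_rescale {r : ℝ} (hr : r ≠ 0) (u : Fn N) : rescale r⁻¹ (rescale r u) = u := by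
  funext x
  simp only [rescale, smul_smul, inv_mul_cancel₀ hr, mul_inv_cancel₀ hr, one_smul, ← mul_assoc,
    ← Complex.ofReal_mul, Complex.ofReal_one, one_mul]

lemma rescale_injective {r : ℝ} (hr : r ≠ 0) : Function.Injective (rescale (N := N) r) :=
  Function.LeftInverse.injective (rescale_inv_rescale hr)

lemma hasFDerivAt_rescale (r : ℝ) {u : Fn N} {x : Vec N} (h : DifferentiableAt ℝ u (r • x)) :
    HasFDerivAt (rescale r u) ((r ^ 2 : ℝ) • fderiv ℝ u (r • x)) x := by
  have hsmul : HasFDerivAt (fun y : Vec N => r • y) (r • ContinuousLinearMap.id ℝ (Vec N)) x :=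
    (hasFDerivAt_id x).const_smul r
  refine ((h.hasFDerivAt.comp x hsmul).const_smul (r : ℂ)).congr_fderiv ?_
  ext v
  simp [Complex.real_smul]
  ring

lemma fderiv_rescale {r : ℝ} (hr : r ≠ 0) (u : Fn N) (x : Vec N) :
    fderiv ℝ (rescale r u) x = (r ^ 2 : ℝ) • fderiv ℝ u (r • x) := by
  by_cases h : DifferentiableAt ℝ u (r • x)
  · exact (hasFDerivAt_rescale r h).fderiv
  · have h' : ¬DifferentiableAt ℝ (rescale r u) x := fun h' => h <| by
      have := (hasFDerivAt_rescale r⁻¹ (u := rescale r u) (x := r • x)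
        (by rwa [smul_smul, inv_mul_cancel₀ hr, one_smul])).differentiableAt
      rwa [rescale_inv_rescale hr] at this
    rw [fderiv_zero_of_not_differentiableAt h, fderiv_zero_of_not_differentiableAt h']
    exact (smul_zero (A := Vec N →L[ℝ] ℂ) (r ^ 2 : ℝ)).symm

lemma pd_rescale {r : ℝ} (hr : r ≠ 0) (u : Fn N) (i : Fin N) (x : Vec N) :
    pd i (rescale r u) x = ((r ^ 2 : ℝ) : ℂ) * pd i u (r • x) := by
  simp [pd, fderiv_rescale hr, Complex.real_smul]

lemma memH1_rescale {r : ℝ} (hr : r ≠ 0) {u : Fn N} (hu : MemH1 u) : MemH1 (rescale r u) := by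
  refine ⟨(MemLp.comp_smul hu.1 hr).const_mul (r : ℂ), ?_⟩
  simp_rw [fderiv_rescale hr u]
  exact (MemLp.comp_smul hu.2 hr).const_smul ((r : ℝ) ^ 2)

lemma integral_eq_of_eq_pow_mul_comp_smul {r : ℝ} (hr : 0 < r) (k : ℕ) {f g : Vec N → ℝ}
    (h : ∀ x, f x = r ^ k * g (r • x)) : ∫ x, f x = r ^ k / r ^ N * ∫ x, g x := by
  simp_rw [h, integral_const_mul, Measure.integral_comp_smul_of_nonneg volume g r (hR := hr.le),
    finrank_euclideanSpace_fin, smul_eq_mul]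
  ring

variable {r : ℝ} (hr : 0 < r)
include hr

lemma L2sq_rescale (u : Fn N) : L2sq (rescale r u) = r ^ 2 / r ^ N * L2sq u :=
  integral_eq_of_eq_pow_mul_comp_smul hr 2 fun x => by
    simp [rescale, mul_pow, abs_of_pos hr]

lemma gradSq_rescale (u : Fn N) : gradSq (rescale r u) = r ^ 4 / r ^ N * gradSq u :=
  integral_eq_of_eq_pow_mul_comp_smul hr 4 fun x => by
    simp only [pd_rescale hr.ne', Finset.mul_sum, norm_mul, mul_pow, Complex.norm_real,
      Real.norm_eq_abs, abs_of_pos (pow_pos hr 2), ← pow_mul]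

lemma integral_re_I_mul_pd_mul_conj_rescale (u : Fn N) (i : Fin N) :
    ∫ x, (Complex.I * pd i (rescale r u) x * (starRingEnd ℂ) (rescale r u x)).re
      = r ^ 3 / r ^ N * ∫ x, (Complex.I * pd i u x * (starRingEnd ℂ) (u x)).re :=
  integral_eq_of_eq_pow_mul_comp_smul hr 3 fun x => by
    rw [← Complex.re_ofReal_mul, pd_rescale hr.ne']
    simp only [rescale, map_mul, Complex.conj_ofReal]
    push_cast
    ring_nf

lemma cdotP_rescale (γ : ℝ) (c : Vec N) (u v : Fn N) :
    cdotP γ (r • c) (rescale r u) (rescale r v) = r ^ 4 / r ^ N * cdotP γ c u v := by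
  simp only [cdotP, Finset.mul_sum, integral_re_I_mul_pd_mul_conj_rescale hr, PiLp.smul_apply,
    smul_eq_mul]
  refine Finset.sum_congr rfl fun i _ => ?_
  ring

lemma Dfun_rescale (u v : Fn N) :
    Dfun (rescale r u) (rescale r v) = r ^ 4 / r ^ N * Dfun u v :=
  integral_eq_of_eq_pow_mul_comp_smul hr 4 fun x => by
    have hnorm (w : Fn N) : ‖rescale r w x‖ = r * ‖w (r • x)‖ := by
      simp [rescale, abs_of_pos hr]
    have hcubic : ((starRingEnd ℂ) (rescale r u x)) ^ 3 * rescale r v x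
        = ((r ^ 4 : ℝ) : ℂ) * (((starRingEnd ℂ) (u (r • x))) ^ 3 * v (r • x)) := by
      simp only [rescale, map_mul, Complex.conj_ofReal]
      push_cast
      ring
    rw [hnorm, hnorm, hcubic, Complex.re_ofReal_mul]
    ring

lemma Qfun_rescale (γ ω : ℝ) (c : Vec N) (u v : Fn N) :
    Qfun γ (r ^ 2 * ω) (r • c) (rescale r u) (rescale r v) = r ^ 4 / r ^ N * Qfun γ ω c u v := by
  simp only [Qfun, gradSq_rescale hr, L2sq_rescale hr, cdotP_rescale hr]
  ring

lemma Sfun_rescale (γ ω : ℝ) (c : Vec N) (u v : Fn N) :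
    Sfun γ (r ^ 2 * ω) (r • c) (rescale r u) (rescale r v) = r ^ 4 / r ^ N * Sfun γ ω c u v := by
  simp only [Sfun, Qfun_rescale hr, Dfun_rescale hr]
  ring

lemma Nfun_rescale (γ ω : ℝ) (c : Vec N) (u v : Fn N) :
    Nfun γ (r ^ 2 * ω) (r • c) (rescale r u) (rescale r v) = r ^ 4 / r ^ N * Nfun γ ω c u v := by
  simp only [Nfun, Qfun_rescale hr, Dfun_rescale hr]
  ring

lemma rescale_mem_NehariSet {γ ω : ℝ} {c : Vec N} {p : Fn N × Fn N} (hp : p ∈ NehariSet γ ω c) :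
    (rescale r p.1, rescale r p.2) ∈ NehariSet γ (r ^ 2 * ω) (r • c) := by
  obtain ⟨hp1, hp2, hp0, hN⟩ := hp
  refine ⟨memH1_rescale hr.ne' hp1, memH1_rescale hr.ne' hp2, fun h => hp0 ?_, ?_⟩
  · obtain ⟨h1, h2⟩ := Prod.mk_eq_zero.1 h
    exact Prod.ext (rescale_injective hr.ne' (h1.trans (rescale_zero r).symm))
      (rescale_injective hr.ne' (h2.trans (rescale_zero r).symm))
  · rw [Nfun_rescale hr, hN, mul_zero]

lemma NehariSet_rescale (γ ω : ℝ) (c : Vec N) :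
    NehariSet γ (r ^ 2 * ω) (r • c)
      = (fun p => (rescale r p.1, rescale r p.2)) '' NehariSet γ ω c := by
  refine Set.Subset.antisymm (fun p hp => ?_)
    (Set.image_subset_iff.2 fun p => rescale_mem_NehariSet hr)
  have hback := rescale_mem_NehariSet (inv_pos.2 hr) hp
  rw [← mul_assoc, ← mul_pow, inv_mul_cancel₀ hr.ne', one_pow, one_mul, smul_smul,
    inv_mul_cancel₀ hr.ne', one_smul] at hback
  refine ⟨_, hback, ?_⟩
  simpa only [inv_inv] using (congrArg₂ Prod.mk (rescale_inv_rescale (inv_ne_zero hr.ne') p.1)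
    (rescale_inv_rescale (inv_ne_zero hr.ne') p.2))

lemma mu_rescale (γ ω : ℝ) (c : Vec N) :
    mu γ (r ^ 2 * ω) (r • c) = r ^ 4 / r ^ N * mu γ ω c := by
  have hK : 0 ≤ r ^ 4 / r ^ N := by positivity
  rw [mu, mu, NehariSet_rescale hr, Set.image_image]
  simp only [Sfun_rescale hr]
  rw [← smul_eq_mul (r ^ 4 / r ^ N), ← Real.sInf_smul_of_nonneg hK, ← Set.image_smul,
    Set.image_image]
  rfl

end Rescale

theorem stmt_17_general {N : ℕ} (γ : ℝ) (ω : ℝ) (c : Vec N) (hc : c ≠ 0) :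
    mu γ ω c = ‖c‖ ^ ((4 : ℝ) - (N : ℝ)) * mu γ (ω / ‖c‖ ^ 2) (‖c‖⁻¹ • c) := by
  have hc' : 0 < ‖c‖ := norm_pos_iff.2 hc
  have h := mu_rescale hc' γ (ω / ‖c‖ ^ 2) (‖c‖⁻¹ • c)
  rw [mul_div_cancel₀ _ (pow_ne_zero 2 hc'.ne'), smul_smul, mul_inv_cancel₀ hc'.ne', one_smul] at h
  rw [h, Real.rpow_sub hc', Real.rpow_natCast, show (4 : ℝ) = ((4 : ℕ) : ℝ) by norm_num,
    Real.rpow_natCast]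

/-- the scaling relation `μ_{ω,c} = |c|^{4−N} μ_{ω/|c|², c/|c|}` for
the Nehari level. -/
theorem stmt_17 {N : ℕ} (hN1 : 1 ≤ N) (hN3 : N ≤ 3)
    (γ : ℝ) (hγ : 0 < γ) (ω : ℝ) (c : Vec N) (hω0 : 0 < ω) (hc : c ≠ 0)
    (hω : ω > max (‖c‖ ^ 2 / 4) (γ * ‖c‖ ^ 2 / 12)) :
    mu γ ω c = ‖c‖ ^ ((4 : ℝ) - (N : ℝ)) * mu γ (ω / ‖c‖ ^ 2) (‖c‖⁻¹ • c) :=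
  stmt_17_general γ ω c hc

end
end
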